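/- Let d ≥ 1 and let ρ be a symmetric non-degenerate probability measure on ℝ^d (ρ(H) < 1 for every affine hyperplane H) with ∫_{ℝ^d} ‖z‖⁴ dρ(z) < ∞, and let Σ be its covariance matrix. Then the function z ↦ exp(−M₄(Σ^{−1/2}z)/12) is integrable with respect to Lebesgue measure on ℝ^d. -/

import Mathlib

open MeasureTheory Filter Matrix Real

noncomputable section

/-- `T_n(x) = ∑ i, x_i ᵗx_i`. -/
def Tmat (d n : ℕ) (x : Fin n → Fin d → ℝ) : Matrix (Fin d) (Fin d) ℝ :=
  ∑ i, Matrix.vecMulVec (x i) (x i)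

/-- `S_n(x) = x_1 + … + x_n`. -/
def Svec (d n : ℕ) (x : Fin n → Fin d → ℝ) : Fin d → ℝ := ∑ i, x i

/-- the Hamiltonian `(1/2)⟨T_n⁻¹ S_n, S_n⟩`. -/
def Hfun (d n : ℕ) (x : Fin n → Fin d → ℝ) : ℝ :=
  (1 / 2) * dotProduct ((Tmat d n x)⁻¹.mulVec (Svec d n x)) (Svec d n x)

/-- normalization constant `Z_n`. -/
def Zconst (d : ℕ) (ρ : Measure (Fin d → ℝ)) (n : ℕ) : ℝ :=
  ∫ x : Fin n → Fin d → ℝ,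
    Set.indicator {x | 0 < (Tmat d n x).det} (fun x => Real.exp (Hfun d n x)) x
    ∂ Measure.pi fun _ => ρ

/-- the Curie-Weiss model of SOC `μ̃_{n,ρ}`. -/
def CW (d : ℕ) (ρ : Measure (Fin d → ℝ)) (n : ℕ) : Measure (Fin n → Fin d → ℝ) :=
  (Measure.pi fun _ => ρ).withDensity fun x =>
    Set.indicator {x | 0 < (Tmat d n x).det}
      (fun x => ENNReal.ofReal (Real.exp (Hfun d n x) / Zconst d ρ n)) x

/-- covariance matrix `Σ = ∫ z ᵗz dρ(z)`. -/
def covM (d : ℕ) (ρ : Measure (Fin d → ℝ)) : Matrix (Fin d) (Fin d) ℝ :=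
  Matrix.of fun i j => ∫ z, z i * z j ∂ρ

/-- `M₄(z) = ∑ (∫ yᵢyⱼyₖyₗ dρ) zᵢzⱼzₖzₗ`. -/
def M4 (d : ℕ) (ρ : Measure (Fin d → ℝ)) (z : Fin d → ℝ) : ℝ :=
  ∑ i : Fin d, ∑ j : Fin d, ∑ k : Fin d, ∑ l : Fin d,
    (∫ y, y i * y j * y k * y l ∂ρ) * (z i * z j * z k * z l)

/-- symmetric measure: invariant under `z ↦ -z`. -/
def SymMeas (d : ℕ) (ρ : Measure (Fin d → ℝ)) : Prop := ρ.map (fun z => -z) = ρ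

/-- condition `(*)` : some Gaussian exponential moment. -/
def CondStar (d : ℕ) (ρ : Measure (Fin d → ℝ)) : Prop :=
  ∃ v₀ > (0:ℝ), Integrable (fun z => Real.exp (v₀ * dotProduct z z)) ρ

/-- the ρ-measure of every vector hyperplane is `< 1/√e`. -/
def HypLt (d : ℕ) (ρ : Measure (Fin d → ℝ)) : Prop :=
  ∀ s : Fin d → ℝ, s ≠ 0 →
    ρ {z | dotProduct s z = 0} < ENNReal.ofReal (1 / Real.sqrt (Real.exp 1))

/-- non-degeneracy: the ρ-measure of every affine hyperplane is `< 1`. -/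
def NonDeg (d : ℕ) (ρ : Measure (Fin d → ℝ)) : Prop :=
  ∀ s : Fin d → ℝ, s ≠ 0 → ∀ c : ℝ, ρ {z | dotProduct s z = c} < 1

-- positive square root of a positive semi-definite matrix (junk value otherwise).
open scoped Classical in
def psqrt (d : ℕ) (M : Matrix (Fin d) (Fin d) ℝ) : Matrix (Fin d) (Fin d) ℝ :=
  if h : M.PosSemidef then
    (h.1.eigenvectorUnitary : Matrix (Fin d) (Fin d) ℝ) *
      Matrix.diagonal (fun i => Real.sqrt (h.1.eigenvalues i)) *
      (star h.1.eigenvectorUnitary : Matrix (Fin d) (Fin d) ℝ)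
  else 0

/-- Euclidean norm on `ℝ^d`. -/
def vnorm (d : ℕ) (v : Fin d → ℝ) : ℝ := Real.sqrt (dotProduct v v)

/-- Frobenius norm on `d × d` matrices. -/
def mnorm (d : ℕ) (M : Matrix (Fin d) (Fin d) ℝ) : ℝ :=
  Real.sqrt (∑ i : Fin d, ∑ j : Fin d, (M i j) ^ 2)

/-- the log-Laplace transform `Λ` of `(Z, Z ᵗZ)`, with values in `(-∞, +∞]`. -/
def Lam (d : ℕ) (ρ : Measure (Fin d → ℝ)) (u : Fin d → ℝ)
    (A : Matrix (Fin d) (Fin d) ℝ) : EReal :=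
  ENNReal.log (∫⁻ z, ENNReal.ofReal
    (Real.exp (dotProduct u z + dotProduct (A.mulVec z) z)) ∂ρ)

/-- the Cramér transform `I` of `(Z, Z ᵗZ)`. -/
def CramerI (d : ℕ) (ρ : Measure (Fin d → ℝ)) (x : Fin d → ℝ)
    (M : Matrix (Fin d) (Fin d) ℝ) : EReal :=
  ⨆ p : (Fin d → ℝ) × {A : Matrix (Fin d) (Fin d) ℝ // A.IsSymm},
    ((dotProduct x p.1 + (M * (p.2 : Matrix (Fin d) (Fin d) ℝ)).trace : ℝ) : EReal)
      - Lam d ρ p.1 p.2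

end

/-! Writing `Y` for a random vector of law `ρ`, `M₄(w) = 𝔼⟨Y, w⟩⁴ ≥ (𝔼⟨Y, w⟩²)² = (ᵗw Σ w)²`
(the variance of `⟨Y, w⟩²` is nonnegative). Non-degeneracy makes `Σ` positive definite, so
`Σ^{-1/2}` is a genuine inverse square root, and for `w = Σ^{-1/2} z` this reads
`M₄(Σ^{-1/2} z) ≥ |z|⁴`, and `|z|⁴ / 12 ≥ |z|² - 3`, so the integrand is dominated by the
integrable Gaussian `e³ e^{-|z|²}`. -/

open MeasureTheory ProbabilityTheory Matrix Real

lemma sq_integral_sq_le_integral_pow_four {Ω : Type*} [MeasurableSpace Ω] {μ : Measure Ω}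
    [IsProbabilityMeasure μ] {X : Ω → ℝ} (hX : AEStronglyMeasurable X μ)
    (h : Integrable (fun ω => X ω ^ 4) μ) :
    (∫ ω, X ω ^ 2 ∂μ) ^ 2 ≤ ∫ ω, X ω ^ 4 ∂μ := by
  have hmem : MemLp (fun ω => X ω ^ 2) 2 μ :=
    (memLp_two_iff_integrable_sq (hX.pow 2)).2 (by simpa only [Pi.pow_apply, ← pow_mul] using h)
  have hvar := variance_nonneg (fun ω => X ω ^ 2) μ
  rw [variance_eq_sub hmem] at hvar
  simp only [Pi.pow_apply, ← pow_mul] at hvar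
  linarith

lemma mul_self_mulVec_inv_mulVec_dotProduct {n : Type*} [Fintype n] [DecidableEq n]
    {Q : Matrix n n ℝ} (hQ : Q.IsSymm) (hdet : IsUnit Q.det) (z : n → ℝ) :
    (Q * Q) *ᵥ (Q⁻¹ *ᵥ z) ⬝ᵥ Q⁻¹ *ᵥ z = z ⬝ᵥ z := by
  rw [mulVec_mulVec, mul_assoc, mul_nonsing_inv Q hdet, mul_one, dotProduct_mulVec,
    ← vecMul_transpose, hQ.eq, vecMul_vecMul, mul_nonsing_inv Q hdet, vecMul_one]

lemma integrable_exp_neg_dotProduct_self {ι : Type*} [Fintype ι] :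
    Integrable (fun z : ι → ℝ => exp (-(z ⬝ᵥ z))) := by
  simp only [dotProduct, ← Finset.sum_neg_distrib, Real.exp_sum]
  exact Integrable.fintype_prod (f := fun _ t => exp (-(t * t))) fun _ => by
    simpa [sq] using integrable_exp_neg_mul_sq one_pos

lemma psqrt_mul_self {d : ℕ} {M : Matrix (Fin d) (Fin d) ℝ} (hM : M.PosSemidef) :
    psqrt d M * psqrt d M = M := by
  set U : Matrix (Fin d) (Fin d) ℝ := ↑hM.1.eigenvectorUnitary
  have hU : star U * U = 1 := Unitary.coe_star_mul_self _
  have hD : diagonal (fun i => √(hM.1.eigenvalues i)) * diagonal (fun i => √(hM.1.eigenvalues i))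
      = diagonal (RCLike.ofReal ∘ hM.1.eigenvalues) := by
    rw [diagonal_mul_diagonal]
    congr 1
    funext i
    simp [Real.mul_self_sqrt (hM.eigenvalues_nonneg i)]
  conv_rhs => rw [hM.1.spectral_theorem, Unitary.conjStarAlgAut_apply, ← hD]
  rw [psqrt, dif_pos hM]
  simp only [mul_assoc]
  rw [← mul_assoc (star U) U, hU, one_mul]

lemma psqrt_isSymm {d : ℕ} (M : Matrix (Fin d) (Fin d) ℝ) : (psqrt d M).IsSymm := by
  rw [← isHermitian_iff_isSymm, psqrt]
  split_ifs
  · simp [IsHermitian, star_eq_conjTranspose, mul_assoc]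
  · exact isHermitian_zero

section Moments

variable {d : ℕ} {ρ : Measure (Fin d → ℝ)}

lemma abs_apply_le_vnorm (y : Fin d → ℝ) (i : Fin d) : |y i| ≤ vnorm d y := by
  rw [vnorm, ← Real.sqrt_sq_eq_abs, sq]
  exact Real.sqrt_le_sqrt <|
    Finset.single_le_sum (f := fun j => y j * y j) (fun _ _ => mul_self_nonneg _)
      (Finset.mem_univ i)

lemma vnorm_nonneg (y : Fin d → ℝ) : 0 ≤ vnorm d y := Real.sqrt_nonneg _

lemma integrable_apply_mul_apply_mul_apply_mul_apply
    (h4 : Integrable (fun z => vnorm d z ^ 4) ρ) (i j k l : Fin d) :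
    Integrable (fun y => y i * y j * y k * y l) ρ := by
  refine h4.mono (by fun_prop) (.of_forall fun y => ?_)
  have hy := abs_apply_le_vnorm y
  calc ‖y i * y j * y k * y l‖ = |y i| * |y j| * |y k| * |y l| := by
        simp only [norm_mul, Real.norm_eq_abs]
    _ ≤ vnorm d y * vnorm d y * vnorm d y * vnorm d y := by
        gcongr <;> simp only [hy, vnorm_nonneg, mul_nonneg]
    _ = vnorm d y ^ 4 := by ring
    _ ≤ ‖vnorm d y ^ 4‖ := Real.le_norm_self _

lemma dotProduct_pow_four (y w : Fin d → ℝ) :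
    (y ⬝ᵥ w) ^ 4 = ∑ i, ∑ j, ∑ k, ∑ l, (y i * y j * y k * y l) * (w i * w j * w k * w l) := by
  simp only [dotProduct, pow_succ, pow_zero, one_mul, Finset.sum_mul, Finset.mul_sum]
  exact Finset.sum_congr rfl fun _ _ => Finset.sum_congr rfl fun _ _ =>
    Finset.sum_congr rfl fun _ _ => Finset.sum_congr rfl fun _ _ => by ring

lemma dotProduct_sq (y w : Fin d → ℝ) :
    (y ⬝ᵥ w) ^ 2 = ∑ i, ∑ j, (y i * y j) * (w i * w j) := by
  simp only [dotProduct, sq, Finset.sum_mul_sum]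
  exact Finset.sum_congr rfl fun _ _ => Finset.sum_congr rfl fun _ _ => by ring

lemma integrable_dotProduct_pow_four (h4 : Integrable (fun z => vnorm d z ^ 4) ρ)
    (w : Fin d → ℝ) :
    Integrable (fun y => (y ⬝ᵥ w) ^ 4) ρ := by
  have := integrable_apply_mul_apply_mul_apply_mul_apply h4
  simp_rw [dotProduct_pow_four]
  fun_prop (disch := exact this _ _ _ _)

lemma integral_dotProduct_pow_four (h4 : Integrable (fun z => vnorm d z ^ 4) ρ)
    (w : Fin d → ℝ) :
    ∫ y, (y ⬝ᵥ w) ^ 4 ∂ρ = M4 d ρ w := by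
  have := integrable_apply_mul_apply_mul_apply_mul_apply h4
  simp_rw [dotProduct_pow_four, M4]
  simp (disch := intros; fun_prop (disch := exact this _ _ _ _)) only
    [integral_finsetSum, integral_mul_const]

lemma integrable_apply_mul_apply [IsFiniteMeasure ρ]
    (h4 : Integrable (fun z => vnorm d z ^ 4) ρ) (i j : Fin d) :
    Integrable (fun y => y i * y j) ρ := by
  refine ((integrable_const 1).add h4).mono (by fun_prop) (.of_forall fun y => ?_)
  have hy := abs_apply_le_vnorm y
  calc ‖y i * y j‖ = |y i| * |y j| := by simp only [norm_mul, Real.norm_eq_abs]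
    _ ≤ vnorm d y * vnorm d y := by gcongr <;> simp only [hy, vnorm_nonneg]
    _ ≤ 1 + vnorm d y ^ 4 := by nlinarith [sq_nonneg (vnorm d y ^ 2 - 1), sq_nonneg (vnorm d y)]
    _ ≤ ‖1 + vnorm d y ^ 4‖ := Real.le_norm_self _

lemma integrable_dotProduct_sq [IsFiniteMeasure ρ] (h4 : Integrable (fun z => vnorm d z ^ 4) ρ)
    (w : Fin d → ℝ) :
    Integrable (fun y => (y ⬝ᵥ w) ^ 2) ρ := by
  have := integrable_apply_mul_apply h4
  simp_rw [dotProduct_sq]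
  fun_prop (disch := exact this _ _)

lemma integral_dotProduct_sq [IsFiniteMeasure ρ] (h4 : Integrable (fun z => vnorm d z ^ 4) ρ)
    (w : Fin d → ℝ) :
    ∫ y, (y ⬝ᵥ w) ^ 2 ∂ρ = covM d ρ *ᵥ w ⬝ᵥ w := by
  have := integrable_apply_mul_apply h4
  simp_rw [dotProduct_sq]
  simp (disch := intros; fun_prop (disch := exact this _ _)) only
    [integral_finsetSum, integral_mul_const]
  simp only [covM, mulVec, dotProduct, of_apply, Finset.sum_mul]
  exact Finset.sum_congr rfl fun _ _ => Finset.sum_congr rfl fun _ _ => by ring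

lemma covM_posDef [IsProbabilityMeasure ρ] (hnd : NonDeg d ρ)
    (h4 : Integrable (fun z => vnorm d z ^ 4) ρ) : (covM d ρ).PosDef := by
  refine posDef_iff_dotProduct_mulVec.2 ⟨?_, fun x hx => ?_⟩
  · ext i j
    simp only [covM, conjTranspose_apply, of_apply, star_trivial, mul_comm]
  rw [star_trivial, dotProduct_comm, ← integral_dotProduct_sq h4]
  refine (integral_nonneg fun y => sq_nonneg _).lt_of_ne' fun h => (hnd x hx 0).ne ?_
  have hae : ∀ᵐ y ∂ρ, x ⬝ᵥ y = 0 := by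
    filter_upwards [(integral_eq_zero_iff_of_nonneg (fun y => sq_nonneg _)
      (integrable_dotProduct_sq h4 x)).1 h] with y hy
    simpa [dotProduct_comm] using hy
  exact (prob_compl_eq_zero_iff (measurableSet_eq_fun (by fun_prop) measurable_const)).1
    (ae_iff.1 hae)

lemma sq_dotProduct_self_le_M4 [IsProbabilityMeasure ρ] (hnd : NonDeg d ρ)
    (h4 : Integrable (fun z => vnorm d z ^ 4) ρ) (z : Fin d → ℝ) :
    (z ⬝ᵥ z) ^ 2 ≤ M4 d ρ ((psqrt d (covM d ρ))⁻¹ *ᵥ z) := by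
  have hcov := covM_posDef hnd h4
  set Q := psqrt d (covM d ρ)
  have hQQ : Q * Q = covM d ρ := psqrt_mul_self hcov.posSemidef
  have hQdet : IsUnit Q.det := by
    rw [isUnit_iff_ne_zero]
    intro h
    simpa [← hQQ, det_mul, h] using hcov.det_pos
  set w := Q⁻¹ *ᵥ z
  calc (z ⬝ᵥ z) ^ 2 = (∫ y, (y ⬝ᵥ w) ^ 2 ∂ρ) ^ 2 := by
        rw [integral_dotProduct_sq h4, ← hQQ,
          mul_self_mulVec_inv_mulVec_dotProduct (psqrt_isSymm _) hQdet]
    _ ≤ ∫ y, (y ⬝ᵥ w) ^ 4 ∂ρ :=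
        sq_integral_sq_le_integral_pow_four (by fun_prop) (integrable_dotProduct_pow_four h4 w)
    _ = M4 d ρ w := integral_dotProduct_pow_four h4 w

lemma continuous_M4 : Continuous (M4 d ρ) := by
  unfold M4
  fun_prop

end Moments

theorem exp_neg_M4_integrable_general
    (d : ℕ) (ρ : Measure (Fin d → ℝ)) [IsProbabilityMeasure ρ]
    (hnd : NonDeg d ρ)
    (h4 : Integrable (fun z => vnorm d z ^ 4) ρ) :
    Integrable (fun z : Fin d → ℝ =>
      Real.exp (-(M4 d ρ ((psqrt d (covM d ρ))⁻¹.mulVec z)) / 12)) volume := by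
  have hcont := continuous_M4 (ρ := ρ)
  refine (integrable_exp_neg_dotProduct_self.const_mul (exp 3)).mono (by fun_prop)
    (.of_forall fun z => ?_)
  have hM := sq_dotProduct_self_le_M4 hnd h4 z
  rw [norm_of_nonneg (exp_pos _).le, norm_of_nonneg (by positivity), ← exp_add]
  exact exp_le_exp.2 (by nlinarith [sq_nonneg (z ⬝ᵥ z - 6)])

/-- `z ↦ exp(-M₄(Σ^{-1/2}z)/12)` is Lebesgue-integrable on `ℝ^d`. -/
theorem exp_neg_M4_integrable
    (d : ℕ) (hd : 1 ≤ d) (ρ : Measure (Fin d → ℝ)) [IsProbabilityMeasure ρ]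
    (hsym : SymMeas d ρ) (hnd : NonDeg d ρ)
    (h4 : Integrable (fun z => vnorm d z ^ 4) ρ) :
    Integrable (fun z : Fin d → ℝ =>
      Real.exp (-(M4 d ρ ((psqrt d (covM d ρ))⁻¹.mulVec z)) / 12)) volume :=
  exp_neg_M4_integrable_general d ρ hnd h4
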